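/- arXiv:1101.5177 — 3 statements merged into one kernel-verified Lean document; each statement's English description precedes it below -/
import Mathlib

section
/- Let n ≥ 1, a ∈ ℝⁿ, let V, U ⊂ ℝⁿ be open, let ρ : V → ℝ be continuously differentiable, and suppose the map Φ : V → U, Φ(x̄) := a + ρ(x̄) x̄, is a bijection whose inverse Θ : U → V is differentiable. Let w : V → ℝ be continuously differentiable and set u := w ∘ Θ. Then for every x ∈ U, writing x̄ := Θ(x) and Ψ(x̄) := ρ(x̄) + ∇ρ(x̄)·x̄, and assuming ρ(x̄) ≠ 0 and Ψ(x̄) ≠ 0: ∇u(x) = (1/ρ(x̄)) ∇w(x̄) − ((x̄ · ∇w(x̄)) / (ρ(x̄) Ψ(x̄))) ∇ρ(x̄). -/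
/-!
Differentiating `Φ ∘ Θ = id` at `x` shows that `h := DΘ(x) v` solves `ρ h + ⟪∇ρ, h⟫ x̄ = v`.
This rank-one perturbation of `ρ • id` is inverted by the Sherman–Morrison formula, with
denominator `ρ Ψ`; pairing the solution with `∇w` and transposing gives
`∇u(x)`, since `⟪∇u(x), v⟫ = ⟪∇w(x̄), DΘ(x) v⟫`.
-/

open RealInnerProductSpace Filter Topology

section LeftInverse

variable {𝕜 E F : Type*} [NontriviallyNormedField 𝕜] [NormedAddCommGroup E] [NormedSpace 𝕜 E]
  [NormedAddCommGroup F] [NormedSpace 𝕜 F]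

theorem hasFDerivAt_const_add_smul_self {ρ : E → 𝕜} {ρ' : StrongDual 𝕜 E} {p : E} (a : E)
    (hρ : HasFDerivAt ρ ρ' p) :
    HasFDerivAt (fun y => a + ρ y • y) (ρ p • ContinuousLinearMap.id 𝕜 E + ρ'.smulRight p) p :=
  (hρ.smul (hasFDerivAt_id p)).const_add a

theorem HasFDerivAt.comp_fderiv_eq_id_of_leftInverse {Φ : F → E} {Θ : E → F} {L : F →L[𝕜] E}
    {x : E} (hΦ : HasFDerivAt Φ L (Θ x)) (hΘ : DifferentiableAt 𝕜 Θ x)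
    (hinv : ∀ᶠ y in 𝓝 x, Φ (Θ y) = y) :
    L.comp (fderiv 𝕜 Θ x) = ContinuousLinearMap.id 𝕜 E :=
  ((hΦ.comp x hΘ.hasFDerivAt).congr_of_eventuallyEq (EventuallyEq.symm hinv)).unique
    (hasFDerivAt_id x)

end LeftInverse

section ShermanMorrison

variable {E : Type*} [NormedAddCommGroup E] [InnerProductSpace ℝ E]

theorem eq_of_smul_add_inner_smul_eq {r : ℝ} {g p h v : E} (hr : r ≠ 0)
    (hΨ : r + ⟪g, p⟫ ≠ 0) (hv : r • h + ⟪g, h⟫ • p = v) :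
    h = r⁻¹ • (v - (⟪g, v⟫ / (r + ⟪g, p⟫)) • p) := by
  have hgh : ⟪g, h⟫ = ⟪g, v⟫ / (r + ⟪g, p⟫) := by
    rw [eq_div_iff hΨ, ← hv, inner_add_right, real_inner_smul_right, real_inner_smul_right]
    ring
  rw [← hgh, ← hv, add_sub_cancel_right, smul_smul, inv_mul_cancel₀ hr, one_smul]

theorem inner_eq_of_smul_add_inner_smul_eq {r : ℝ} {g p h v : E} (hr : r ≠ 0)
    (hΨ : r + ⟪g, p⟫ ≠ 0) (hv : r • h + ⟪g, h⟫ • p = v) (q : E) :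
    ⟪q, h⟫ = ⟪r⁻¹ • q - (⟪p, q⟫ / (r * (r + ⟪g, p⟫))) • g, v⟫ := by
  rw [eq_of_smul_add_inner_smul_eq hr hΨ hv]
  simp only [inner_sub_left, inner_sub_right, real_inner_smul_left, real_inner_smul_right,
    real_inner_comm p q]
  field_simp

end ShermanMorrison

theorem gradient_transformation_general (n : ℕ)
    (a : EuclideanSpace ℝ (Fin n))
    (V U : Set (EuclideanSpace ℝ (Fin n))) (hV : IsOpen V) (hU : IsOpen U)
    (ρ : EuclideanSpace ℝ (Fin n) → ℝ) (hρ : ContDiffOn ℝ 1 ρ V)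
    (Φ : EuclideanSpace ℝ (Fin n) → EuclideanSpace ℝ (Fin n))
    (hΦdef : ∀ xb, Φ xb = a + ρ xb • xb)
    (Θ : EuclideanSpace ℝ (Fin n) → EuclideanSpace ℝ (Fin n))
    (hΘmaps : Set.MapsTo Θ U V) (hΘinv : ∀ x ∈ U, Φ (Θ x) = x)
    (hΘdiff : DifferentiableOn ℝ Θ U)
    (w : EuclideanSpace ℝ (Fin n) → ℝ) (hw : ContDiffOn ℝ 1 w V)
    (u : EuclideanSpace ℝ (Fin n) → ℝ) (hu : u = w ∘ Θ)
    (x : EuclideanSpace ℝ (Fin n)) (hx : x ∈ U)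
    (hρ0 : ρ (Θ x) ≠ 0)
    (Ψ : ℝ) (hΨdef : Ψ = ρ (Θ x) + ⟪gradient ρ (Θ x), Θ x⟫) (hΨ0 : Ψ ≠ 0) :
    gradient u x =
      (ρ (Θ x))⁻¹ • gradient w (Θ x)
        - (⟪Θ x, gradient w (Θ x)⟫ / (ρ (Θ x) * Ψ)) • gradient ρ (Θ x) := by
  subst hu hΨdef
  have hxb : Θ x ∈ V := hΘmaps hx
  have hρd : DifferentiableAt ℝ ρ (Θ x) :=
    (hρ.differentiableOn one_ne_zero).differentiableAt (hV.mem_nhds hxb)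
  have hwd : DifferentiableAt ℝ w (Θ x) :=
    (hw.differentiableOn one_ne_zero).differentiableAt (hV.mem_nhds hxb)
  have hΘd : DifferentiableAt ℝ Θ x := hΘdiff.differentiableAt (hU.mem_nhds hx)
  have hΦ := funext hΦdef ▸ hasFDerivAt_const_add_smul_self a hρd.hasFDerivAt
  have hDΘ := hΦ.comp_fderiv_eq_id_of_leftInverse hΘd (eventually_of_mem (hU.mem_nhds hx) hΘinv)
  refine ext_inner_right ℝ fun v => ?_
  have hsolve : ρ (Θ x) • fderiv ℝ Θ x v + ⟪gradient ρ (Θ x), fderiv ℝ Θ x v⟫ • Θ x = v := by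
    simpa [inner_gradient_left] using congr($hDΘ v)
  rw [inner_gradient_left, fderiv_comp x hwd hΘd, ContinuousLinearMap.comp_apply,
    ← inner_gradient_left, inner_eq_of_smul_add_inner_smul_eq hρ0 hΨ0 hsolve]

/-- Equation (A.8): transformation rule for the spatial gradient under the radial change of
variables `x = a + ρ(x̄)x̄`, with `Ψ = ρ + ∇ρ·x̄`:
`∇u(x) = (1/ρ(x̄)) ∇w(x̄) − ((x̄·∇w(x̄))/(ρ(x̄)Ψ(x̄))) ∇ρ(x̄)` for `u = w ∘ Θ`. -/
theorem gradient_transformation (n : ℕ) (hn : 1 ≤ n)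
    (a : EuclideanSpace ℝ (Fin n))
    (V U : Set (EuclideanSpace ℝ (Fin n))) (hV : IsOpen V) (hU : IsOpen U)
    (ρ : EuclideanSpace ℝ (Fin n) → ℝ) (hρ : ContDiffOn ℝ 1 ρ V)
    (Φ : EuclideanSpace ℝ (Fin n) → EuclideanSpace ℝ (Fin n))
    (hΦdef : ∀ xb, Φ xb = a + ρ xb • xb)
    (hbij : Set.BijOn Φ V U)
    (Θ : EuclideanSpace ℝ (Fin n) → EuclideanSpace ℝ (Fin n))
    (hΘmaps : Set.MapsTo Θ U V) (hΘinv : ∀ x ∈ U, Φ (Θ x) = x)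
    (hΘdiff : DifferentiableOn ℝ Θ U)
    (w : EuclideanSpace ℝ (Fin n) → ℝ) (hw : ContDiffOn ℝ 1 w V)
    (u : EuclideanSpace ℝ (Fin n) → ℝ) (hu : u = w ∘ Θ)
    (x : EuclideanSpace ℝ (Fin n)) (hx : x ∈ U)
    (hρ0 : ρ (Θ x) ≠ 0)
    (Ψ : ℝ) (hΨdef : Ψ = ρ (Θ x) + ⟪gradient ρ (Θ x), Θ x⟫) (hΨ0 : Ψ ≠ 0) :
    gradient u x =
      (ρ (Θ x))⁻¹ • gradient w (Θ x)
        - (⟪Θ x, gradient w (Θ x)⟫ / (ρ (Θ x) * Ψ)) • gradient ρ (Θ x) :=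
  gradient_transformation_general n a V U hV hU ρ hρ Φ hΦdef Θ hΘmaps hΘinv hΘdiff w hw u hu x hx
    hρ0 Ψ hΨdef hΨ0
end

section
/- Let n ≥ 1, a ∈ ℝⁿ, let U ⊂ ℝⁿ be open, and let π : U → ℝ and ρ : ℝⁿ → ℝ be continuously differentiable with π(x) · ρ(π(x)(x − a)) = 1 for all x ∈ U. Fix x ∈ U, set x̄ := π(x)(x − a) and Ψ := ρ(x̄) + ∇ρ(x̄)·x̄, and assume Ψ ≠ 0. Define a_{ij} := π(x)² δ_{ij} + 2π(x)(x − a)^j ∂_{x^i}π(x) + (x − a)^i (x − a)^j |∇π(x)|². Then a_{ij} = δ_{ij}/ρ(x̄)² − 2 (∂_{x̄^i}ρ)(x̄) x̄^j/(ρ(x̄)² Ψ) + x̄^i x̄^j |∇ρ(x̄)|²/(ρ(x̄)² Ψ²). -/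
/-!
Differentiating `π(y) ρ(π(y)(y − a)) = 1` at `x` gives, for every direction `v`,
`π'(x)v · Ψ = −π(x)² ρ'(x̄)v`, because `ρ'(x̄)(π(x)(x − a)) = ρ'(x̄)x̄`. With `π = 1/ρ(x̄)` and
`x − a = ρ(x̄)x̄` the identity for `a_{ij}` is then a rational-function identity in the partial
derivatives.
-/

open Filter Topology

theorem fderiv_mul_eq_of_mul_comp_smul_sub_eq_one {E : Type*} [NormedAddCommGroup E]
    [NormedSpace ℝ E] {p ρ : E → ℝ} {a x : E}
    (hrel : ∀ᶠ y in 𝓝 x, p y * ρ (p y • (y - a)) = 1)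
    (hp : DifferentiableAt ℝ p x) (hρ : DifferentiableAt ℝ ρ (p x • (x - a))) (v : E) :
    fderiv ℝ p x v * (ρ (p x • (x - a)) + fderiv ℝ ρ (p x • (x - a)) (p x • (x - a))) =
      -p x ^ 2 * fderiv ℝ ρ (p x • (x - a)) v := by
  set P := fderiv ℝ p x
  have hmap : HasFDerivAt (fun y => p y • (y - a))
      (p x • ContinuousLinearMap.id ℝ E + P.smulRight (x - a)) x :=
    hp.hasFDerivAt.smul ((hasFDerivAt_id x).sub_const a)
  have hprod := hp.hasFDerivAt.mul (hρ.hasFDerivAt.comp x hmap)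
  have hzero : HasFDerivAt (fun y => p y * ρ (p y • (y - a))) (0 : E →L[ℝ] ℝ) x :=
    (hasFDerivAt_const (1 : ℝ) x).congr_of_eventuallyEq hrel
  have hv := DFunLike.congr_fun (hprod.unique hzero) v
  simp only [add_apply, FunLike.coe_smul, Pi.smul_apply, ContinuousLinearMap.coe_comp,
    Function.comp_apply, ContinuousLinearMap.smulRight_apply, ContinuousLinearMap.id_apply,
    zero_apply, smul_eq_mul, map_add, map_smul] at hv
  rw [map_smul, smul_eq_mul]
  linear_combination hv

theorem coefficient_entry_eq_of_mul_eq_neg {ι : Type*} [Fintype ι] {p ρ Ψ d : ℝ}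
    (hpρ : p * ρ = 1) (hΨ : Ψ ≠ 0) {P R y : ι → ℝ} (hPR : ∀ k, P k * Ψ = -p ^ 2 * R k)
    (i j : ι) :
    p ^ 2 * d + 2 * p * y j * P i + y i * y j * ∑ k, P k ^ 2 =
      d / ρ ^ 2 - 2 * R i * (p * y j) / (ρ ^ 2 * Ψ)
        + p * y i * (p * y j) * (∑ k, R k ^ 2) / (ρ ^ 2 * Ψ ^ 2) := by
  have hp : p ≠ 0 := left_ne_zero_of_mul_eq_one hpρ
  have hρ : ρ = p⁻¹ := eq_inv_of_mul_eq_one_right hpρ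
  have hP : ∀ k, P k = -p ^ 2 * R k / Ψ := fun k => by rw [eq_div_iff hΨ, hPR]
  simp only [hP, hρ, div_pow, neg_mul, neg_div, neg_sq, ← Finset.sum_div, ← Finset.mul_sum,
    mul_pow]
  field_simp
  ring

theorem coefficient_matrix_in_rho_general (n : ℕ)
    (a : EuclideanSpace ℝ (Fin n))
    (U : Set (EuclideanSpace ℝ (Fin n))) (hU : IsOpen U)
    (p : EuclideanSpace ℝ (Fin n) → ℝ) (ρ : EuclideanSpace ℝ (Fin n) → ℝ)
    (hp : ContDiffOn ℝ 1 p U) (hρ : ContDiff ℝ 1 ρ)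
    (hrel : ∀ x ∈ U, p x * ρ (p x • (x - a)) = 1)
    (x : EuclideanSpace ℝ (Fin n)) (hx : x ∈ U)
    (xb : EuclideanSpace ℝ (Fin n)) (hxb : xb = p x • (x - a))
    (Ψ : ℝ) (hΨ : Ψ = ρ xb + fderiv ℝ ρ xb xb) (hΨ0 : Ψ ≠ 0) :
    ∀ i j : Fin n,
      p x ^ 2 * (if i = j then (1:ℝ) else 0)
          + 2 * p x * (x - a) j * fderiv ℝ p x (EuclideanSpace.single i 1)
          + (x - a) i * (x - a) j *
              ∑ k, (fderiv ℝ p x (EuclideanSpace.single k 1)) ^ 2 =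
        (if i = j then (1:ℝ) else 0) / ρ xb ^ 2
          - 2 * fderiv ℝ ρ xb (EuclideanSpace.single i 1) * xb j / (ρ xb ^ 2 * Ψ)
          + xb i * xb j *
              (∑ k, (fderiv ℝ ρ xb (EuclideanSpace.single k 1)) ^ 2) / (ρ xb ^ 2 * Ψ ^ 2) := by
  intro i j
  have hUx : U ∈ 𝓝 x := hU.mem_nhds hx
  have hpx : DifferentiableAt ℝ p x :=
    ((hp x hx).differentiableWithinAt one_ne_zero).differentiableAt hUx
  have hPR := fderiv_mul_eq_of_mul_comp_smul_sub_eq_one (eventually_of_mem hUx hrel) hpx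
    (hρ.differentiable one_ne_zero _)
  have hcoord : ∀ k, xb k = p x * (x - a) k := fun k => by rw [hxb]; rfl
  subst hxb hΨ
  rw [hcoord i, hcoord j]
  exact coefficient_entry_eq_of_mul_eq_neg (hrel x hx) hΨ0
    (fun k => hPR (EuclideanSpace.single k 1)) i j

/-- The coefficient matrix `a_{ij} = π²δ_{ij} + 2π (x−a)^j π_{x^i} + (x−a)^i (x−a)^j |∇π|²`
of the transformed heat operator, rewritten in terms of the inverse profile `ρ`:
`a_{ij} = δ_{ij}/ρ² − 2ρ_{x̄^i} x̄^j/(ρ²Ψ) + x̄^i x̄^j |∇ρ|²/(ρ²Ψ²)` at `x̄ = π(x)(x−a)`. -/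
theorem coefficient_matrix_in_rho (n : ℕ) (hn : 1 ≤ n)
    (a : EuclideanSpace ℝ (Fin n))
    (U : Set (EuclideanSpace ℝ (Fin n))) (hU : IsOpen U)
    (p : EuclideanSpace ℝ (Fin n) → ℝ) (ρ : EuclideanSpace ℝ (Fin n) → ℝ)
    (hp : ContDiffOn ℝ 1 p U) (hρ : ContDiff ℝ 1 ρ)
    (hrel : ∀ x ∈ U, p x * ρ (p x • (x - a)) = 1)
    (x : EuclideanSpace ℝ (Fin n)) (hx : x ∈ U)
    (xb : EuclideanSpace ℝ (Fin n)) (hxb : xb = p x • (x - a))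
    (Ψ : ℝ) (hΨ : Ψ = ρ xb + fderiv ℝ ρ xb xb) (hΨ0 : Ψ ≠ 0) :
    ∀ i j : Fin n,
      p x ^ 2 * (if i = j then (1:ℝ) else 0)
          + 2 * p x * (x - a) j * fderiv ℝ p x (EuclideanSpace.single i 1)
          + (x - a) i * (x - a) j *
              ∑ k, (fderiv ℝ p x (EuclideanSpace.single k 1)) ^ 2 =
        (if i = j then (1:ℝ) else 0) / ρ xb ^ 2
          - 2 * fderiv ℝ ρ xb (EuclideanSpace.single i 1) * xb j / (ρ xb ^ 2 * Ψ)
          + xb i * xb j *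
              (∑ k, (fderiv ℝ ρ xb (EuclideanSpace.single k 1)) ^ 2) / (ρ xb ^ 2 * Ψ ^ 2) :=
  coefficient_matrix_in_rho_general n a U hU p ρ hp hρ hrel x hx xb hxb Ψ hΨ hΨ0
end

section
/- Let n ≥ 1 and let π : ℝⁿ → ℝ be continuously differentiable with |π(y) − 1| ≤ 1/8 and ‖∇π(y)‖ ≤ 1/8 for all y ∈ ℝⁿ. Let a ∈ ℝⁿ and let x̄ ∈ ℝⁿ satisfy 1/2 ≤ |x̄| ≤ 2. Then there exists a unique s ∈ [1/2, 3/2] such that π(a + s x̄) · s = 1. -/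
/-!
On `[0, 3/2]` the map `s ↦ π(a + s x̄) s` has derivative at least `7/8 - (1/8)·2·(3/2) = 1/2`,
so it is strictly increasing there; it is at most `9/16` at `s = 1/2` and at least `21/16` at
`s = 3/2`, so by the intermediate value theorem it takes the value `1` exactly once on `[1/2, 3/2]`.
-/

open Set

theorem existsUnique_eq_of_strictMonoOn_Icc {α δ : Type*} [ConditionallyCompleteLinearOrder α]
    [DenselyOrdered α] [TopologicalSpace α] [OrderTopology α] [LinearOrder δ]
    [TopologicalSpace δ] [OrderClosedTopology δ] {g : α → δ} {l u : α} {c : δ} (hlu : l ≤ u)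
    (hcont : ContinuousOn g (Icc l u)) (hmono : StrictMonoOn g (Icc l u))
    (hl : g l ≤ c) (hu : c ≤ g u) :
    ∃! s, s ∈ Icc l u ∧ g s = c := by
  obtain ⟨s, hs, hgs⟩ := intermediate_value_Icc hlu hcont ⟨hl, hu⟩
  exact ⟨s, ⟨hs, hgs⟩, fun t ⟨ht, hgt⟩ => hmono.injOn ht hs (hgt.trans hgs.symm)⟩

section AlongLine

variable {E : Type*} [NormedAddCommGroup E] [NormedSpace ℝ E] {f : E → ℝ} {a v : E}

theorem hasDerivAt_mul_along_line {s : ℝ} (hf : DifferentiableAt ℝ f (a + s • v)) :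
    HasDerivAt (fun t : ℝ => f (a + t • v) * t)
      (fderiv ℝ f (a + s • v) v * s + f (a + s • v)) s := by
  have hline : HasDerivAt (fun t : ℝ => a + t • v) v s := by
    simpa using ((hasDerivAt_id s).smul_const v).const_add a
  have hcomp : HasDerivAt (fun t : ℝ => f (a + t • v)) (fderiv ℝ f (a + s • v) v) s :=
    hf.hasFDerivAt.comp_hasDerivAt s hline
  simpa using hcomp.fun_mul (hasDerivAt_id' s)

/-- The derivative `f'(a + s v) v · s + f(a + s v)` of `s ↦ f(a + s v) s` stays positive as long
as the first term, of size at most `L ‖v‖ S`, cannot cancel the lower bound `m` of the second. -/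
theorem strictMonoOn_mul_along_line {m L S : ℝ} (hf : Differentiable ℝ f) (hm : ∀ y, m ≤ f y)
    (hL : ∀ y, ‖fderiv ℝ f y‖ ≤ L) (hLS : L * ‖v‖ * S < m) :
    StrictMonoOn (fun t : ℝ => f (a + t • v) * t) (Icc 0 S) := by
  have hderiv (s : ℝ) := hasDerivAt_mul_along_line (a := a) (v := v) (hf (a + s • v))
  refine strictMonoOn_of_hasDerivWithinAt_pos (convex_Icc 0 S)
    (fun s _ => (hderiv s).continuousAt.continuousWithinAt)
    (fun s _ => (hderiv s).hasDerivWithinAt) fun s hs => ?_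
  rw [interior_Icc] at hs
  have hdir : |fderiv ℝ f (a + s • v) v| ≤ L * ‖v‖ :=
    ((fderiv ℝ f _).le_opNorm v).trans (by gcongr; exact hL _)
  have hterm : |fderiv ℝ f (a + s • v) v * s| ≤ L * ‖v‖ * S := by
    rw [abs_mul, abs_of_pos hs.1]
    exact mul_le_mul hdir hs.2.le hs.1.le ((abs_nonneg _).trans hdir)
  linarith [neg_abs_le (fderiv ℝ f (a + s • v) v * s), hm (a + s • v)]

end AlongLine

theorem inverse_profile_solvable_general (n : ℕ)
    (p : EuclideanSpace ℝ (Fin n) → ℝ) (hp : ContDiff ℝ 1 p)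
    (hp1 : ∀ y, |p y - 1| ≤ 1/8) (hp2 : ∀ y, ‖fderiv ℝ p y‖ ≤ 1/8)
    (a xb : EuclideanSpace ℝ (Fin n)) (hxb : 1/2 ≤ ‖xb‖ ∧ ‖xb‖ ≤ 2) :
    ∃! s : ℝ, s ∈ Set.Icc (1/2 : ℝ) (3/2) ∧ p (a + s • xb) * s = 1 := by
  have hlow (y) : 7/8 ≤ p y := by linarith [(abs_le.mp (hp1 y)).1]
  have hup (y) : p y ≤ 9/8 := by linarith [(abs_le.mp (hp1 y)).2]
  have hmono : StrictMonoOn (fun t : ℝ => p (a + t • xb) * t) (Icc 0 (3/2)) :=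
    strictMonoOn_mul_along_line (hp.differentiable one_ne_zero) hlow hp2
      (by nlinarith [hxb.2])
  refine existsUnique_eq_of_strictMonoOn_Icc (by norm_num) ?_
    (hmono.mono (Icc_subset_Icc (by norm_num) le_rfl)) ?_ ?_
  · exact ((hp.continuous.comp (by fun_prop)).mul continuous_id).continuousOn
  · linarith [hup (a + (1/2 : ℝ) • xb)]
  · linarith [hlow (a + (3/2 : ℝ) • xb)]

/-- Solvability of the defining equation of the inverse profile `ρ` of the change of
variables fixing the moving domain: if `π` is uniformly close to `1` with small gradient,
then for `1/2 ≤ |x̄| ≤ 2` the equation `π(a + s x̄) s = 1` has a unique solution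
`s ∈ [1/2, 3/2]`. -/
theorem inverse_profile_solvable (n : ℕ) (hn : 1 ≤ n)
    (p : EuclideanSpace ℝ (Fin n) → ℝ) (hp : ContDiff ℝ 1 p)
    (hp1 : ∀ y, |p y - 1| ≤ 1/8) (hp2 : ∀ y, ‖fderiv ℝ p y‖ ≤ 1/8)
    (a xb : EuclideanSpace ℝ (Fin n)) (hxb : 1/2 ≤ ‖xb‖ ∧ ‖xb‖ ≤ 2) :
    ∃! s : ℝ, s ∈ Set.Icc (1/2 : ℝ) (3/2) ∧ p (a + s • xb) * s = 1 :=
  inverse_profile_solvable_general n p hp hp1 hp2 a xb hxb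
end
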